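/- arXiv:2302.08001 — 2 statements merged into one kernel-verified Lean document; each statement's English description precedes it below -/
import Mathlib

section
/- If f : S × A → ℝ satisfies the Bellman flow constraints (nonnegativity and ∑_a f(s,a) = η(s) + γ ∑_{s'}∑_a P(s|s',a) f(s',a) for all s), then the policy π defined by π(a|s) = f(s,a)/∑_{a'} f(s,a') (for states with ∑_{a'} f(s,a') > 0, arbitrary otherwise) has occupancy measure exactly f, i.e., ρ^π(s,a) = f(s,a) for all s, a. -/
/-!
The discounted state density `s ↦ ∑ₜ γᵗ Pr(sᵗ = s)` of `π` and the state mass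
`s ↦ ∑ₐ f(s,a)` of a flow both solve the linear Bellman equation `x = η + γ • M x`, where `M`
is the state-transition matrix of `π`. A column-stochastic matrix does not increase the ℓ¹ norm,
so for `|γ| < 1` this equation has at most one solution, and the two functions agree. Since
`ρ^π(s,a) = ρ^π(s) π(a|s)` and `f(s,a) = π(a|s) ∑ₐ' f(s,a')`, the occupancies agree as well.
-/

/-- Distribution of the state `s^t` of the Markov chain induced by stationary policy `π`,
transition kernel `P` and initial distribution `η`. -/
noncomputable def stateDist {S A : Type*} [Fintype S] [Fintype A]
    (P : S → A → S → ℝ) (π : S → A → ℝ) (η : S → ℝ) : ℕ → S → ℝ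
  | 0 => η
  | t + 1 => fun s => ∑ s', ∑ a, P s' a s * π s' a * stateDist P π η t s'

/-- Discounted state density `ρ^π(s) = ∑_t γ^t Pr(s^t = s)`. -/
noncomputable def density {S A : Type*} [Fintype S] [Fintype A]
    (P : S → A → S → ℝ) (π : S → A → ℝ) (η : S → ℝ) (γ : ℝ) (s : S) : ℝ :=
  ∑' t : ℕ, γ ^ t * stateDist P π η t s

/-- Discounted occupancy measure `ρ^π(s,a) = ∑_t γ^t Pr(s^t = s, a^t = a)`. -/
noncomputable def occupancy {S A : Type*} [Fintype S] [Fintype A]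
    (P : S → A → S → ℝ) (π : S → A → ℝ) (η : S → ℝ) (γ : ℝ) (s : S) (a : A) : ℝ :=
  ∑' t : ℕ, γ ^ t * (stateDist P π η t s * π s a)

open Finset Matrix

namespace Matrix

variable {m n : Type*} [Fintype m] [Fintype n]

theorem sum_abs_mulVec_le {M : Matrix m n ℝ} (hM0 : ∀ i j, 0 ≤ M i j)
    (hM1 : ∀ j, ∑ i, M i j ≤ 1) (x : n → ℝ) :
    ∑ i, |(M *ᵥ x) i| ≤ ∑ j, |x j| :=
  calc ∑ i, |(M *ᵥ x) i| ≤ ∑ i, ∑ j, M i j * |x j| := by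
        gcongr with i
        refine (abs_sum_le_sum_abs _ _).trans_eq ?_
        simp_rw [abs_mul, abs_of_nonneg (hM0 _ _)]
    _ = ∑ j, (∑ i, M i j) * |x j| := by rw [sum_comm]; simp_rw [sum_mul]
    _ ≤ ∑ j, |x j| := by
        gcongr with j
        exact mul_le_of_le_one_left (abs_nonneg _) (hM1 j)

theorem eq_zero_of_eq_smul_mulVec {M : Matrix n n ℝ} (hM0 : ∀ i j, 0 ≤ M i j)
    (hM1 : ∀ j, ∑ i, M i j ≤ 1) {c : ℝ} (hc : |c| < 1) {x : n → ℝ} (hx : x = c • M *ᵥ x) :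
    x = 0 := by
  have habs : ∀ i, |x i| = |c| * |(M *ᵥ x) i| := fun i ↦ by
    rw [← abs_mul]
    exact congrArg abs (congrFun hx i)
  have hnonneg : 0 ≤ ∑ i, |x i| := sum_nonneg fun i _ ↦ abs_nonneg (x i)
  have hle : ∑ i, |x i| ≤ |c| * ∑ i, |x i| :=
    calc ∑ i, |x i| = |c| * ∑ i, |(M *ᵥ x) i| := by simp_rw [habs, mul_sum]
      _ ≤ |c| * ∑ i, |x i| := mul_le_mul_of_nonneg_left (sum_abs_mulVec_le hM0 hM1 x) (abs_nonneg c)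
  have hzero : ∑ i, |x i| = 0 := by nlinarith
  funext i
  exact abs_eq_zero.mp ((sum_eq_zero_iff_of_nonneg fun i _ ↦ abs_nonneg (x i)).mp hzero i
    (mem_univ i))

theorem eq_of_eq_add_smul_mulVec {M : Matrix n n ℝ} (hM0 : ∀ i j, 0 ≤ M i j)
    (hM1 : ∀ j, ∑ i, M i j ≤ 1) {c : ℝ} (hc : |c| < 1) {b x y : n → ℝ}
    (hx : x = b + c • M *ᵥ x) (hy : y = b + c • M *ᵥ y) : x = y := by
  refine sub_eq_zero.mp (eq_zero_of_eq_smul_mulVec hM0 hM1 hc ?_)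
  calc x - y = (b + c • M *ᵥ x) - (b + c • M *ᵥ y) := by rw [← hx, ← hy]
    _ = c • M *ᵥ (x - y) := by rw [mulVec_sub, smul_sub]; abel

end Matrix

theorem eq_mul_sum_of_eq_div_sum {ι : Type*} [Fintype ι] {w p : ι → ℝ} (hw : ∀ i, 0 ≤ w i)
    (hp : ∀ i, 0 < ∑ j, w j → p i = w i / ∑ j, w j) (i : ι) : w i = p i * ∑ j, w j := by
  rcases (sum_nonneg fun j _ ↦ hw j).eq_or_lt with h | h
  · rw [← h, mul_zero]
    exact (sum_eq_zero_iff_of_nonneg fun j _ ↦ hw j).mp h.symm i (mem_univ i)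
  · rw [hp i h, div_mul_cancel₀ _ h.ne']

section MDP

variable {S A : Type*} [Fintype A] {P : S → A → S → ℝ} {π : S → A → ℝ}

/-- Entry `(s, s')` is the probability of moving from `s'` to `s` under `π`, so state
distributions are column vectors and evolve by `transitionMatrix P π *ᵥ ·`. -/
noncomputable def transitionMatrix (P : S → A → S → ℝ) (π : S → A → ℝ) : Matrix S S ℝ :=
  of fun s s' ↦ ∑ a, P s' a s * π s' a

theorem transitionMatrix_nonneg (hP0 : ∀ s a s', 0 ≤ P s a s') (hπ0 : ∀ s a, 0 ≤ π s a)
    (s s' : S) : 0 ≤ transitionMatrix P π s s' :=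
  sum_nonneg fun _ _ ↦ mul_nonneg (hP0 _ _ _) (hπ0 _ _)

variable [Fintype S] {η : S → ℝ} {γ : ℝ}

theorem sum_transitionMatrix (hP1 : ∀ s a, ∑ s', P s a s' = 1) (hπ1 : ∀ s, ∑ a, π s a = 1)
    (s' : S) : ∑ s, transitionMatrix P π s s' = 1 := by
  simp only [transitionMatrix, of_apply]
  rw [sum_comm]
  simp_rw [← sum_mul, hP1, one_mul, hπ1]

theorem transitionMatrix_mulVec_apply (x : S → ℝ) (s : S) :
    (transitionMatrix P π *ᵥ x) s = ∑ s', ∑ a, P s' a s * π s' a * x s' := by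
  simp only [transitionMatrix, mulVec, dotProduct, of_apply, sum_mul]

theorem stateDist_succ (t : ℕ) :
    stateDist P π η (t + 1) = transitionMatrix P π *ᵥ stateDist P π η t := by
  funext s
  rw [transitionMatrix_mulVec_apply]
  rfl

theorem sum_abs_stateDist_le (hP0 : ∀ s a s', 0 ≤ P s a s') (hP1 : ∀ s a, ∑ s', P s a s' = 1)
    (hπ0 : ∀ s a, 0 ≤ π s a) (hπ1 : ∀ s, ∑ a, π s a = 1) (t : ℕ) :
    ∑ s, |stateDist P π η t s| ≤ ∑ s, |η s| := by
  induction t with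
  | zero => rfl
  | succ t ih =>
    rw [stateDist_succ]
    exact (sum_abs_mulVec_le (transitionMatrix_nonneg hP0 hπ0)
      (fun s' ↦ (sum_transitionMatrix hP1 hπ1 s').le) _).trans ih

theorem hasSum_density (hγ : |γ| < 1) (hP0 : ∀ s a s', 0 ≤ P s a s')
    (hP1 : ∀ s a, ∑ s', P s a s' = 1) (hπ0 : ∀ s a, 0 ≤ π s a) (hπ1 : ∀ s, ∑ a, π s a = 1) :
    HasSum (fun t ↦ γ ^ t • stateDist P π η t) (density P π η γ) := by
  refine Pi.hasSum.mpr fun s ↦ (Summable.of_norm_bounded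
    ((summable_geometric_of_lt_one (abs_nonneg γ) hγ).mul_right (∑ s', |η s'|)) fun t ↦ ?_).hasSum
  rw [Pi.smul_apply, smul_eq_mul, Real.norm_eq_abs, abs_mul, abs_pow]
  gcongr
  exact (single_le_sum (fun s' _ ↦ abs_nonneg (stateDist P π η t s')) (mem_univ s)).trans
    (sum_abs_stateDist_le hP0 hP1 hπ0 hπ1 t)

theorem density_eq_bellman (hγ : |γ| < 1) (hP0 : ∀ s a s', 0 ≤ P s a s')
    (hP1 : ∀ s a, ∑ s', P s a s' = 1) (hπ0 : ∀ s a, 0 ≤ π s a) (hπ1 : ∀ s, ∑ a, π s a = 1) :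
    density P π η γ = η + γ • transitionMatrix P π *ᵥ density P π η γ := by
  have h := hasSum_density (η := η) hγ hP0 hP1 hπ0 hπ1
  have hstep : HasSum (fun t ↦ γ ^ (t + 1) • stateDist P π η (t + 1))
      (γ • transitionMatrix P π *ᵥ density P π η γ) := by
    convert (h.map (mulVecLin (transitionMatrix P π))
      (LinearMap.continuous_of_finiteDimensional _)).const_smul γ using 1
    · funext t
      simp only [Function.comp_apply, mulVecLin_apply, stateDist_succ, mulVec_smul, smul_smul,
        pow_succ']
    · rfl
  have hshift := (hasSum_nat_add_iff' 1).mpr h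
  rw [sum_range_one, pow_zero, one_smul] at hshift
  exact eq_add_of_sub_eq' (hshift.unique hstep)

theorem occupancy_eq_density_mul (s : S) (a : A) :
    occupancy P π η γ s a = density P π η γ s * π s a := by
  simp only [occupancy, density, ← tsum_mul_right, mul_assoc]

theorem flow_mass_eq_bellman {f : S → A → ℝ}
    (hfBF : ∀ s, ∑ a, f s a = η s + γ * ∑ s', ∑ a, P s' a s * f s' a)
    (hfπ : ∀ s a, f s a = π s a * ∑ a', f s a') :
    (fun s ↦ ∑ a, f s a) = η + γ • transitionMatrix P π *ᵥ fun s ↦ ∑ a, f s a := by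
  funext s
  rw [Pi.add_apply, Pi.smul_apply, smul_eq_mul, transitionMatrix_mulVec_apply, hfBF]
  refine congrArg (η s + γ * ·) (sum_congr rfl fun s' _ ↦ sum_congr rfl fun a _ ↦ ?_)
  rw [hfπ s' a, mul_assoc]

end MDP

theorem bellman_flow_solution_is_occupancy_general {S A : Type*} [Fintype S] [Fintype A]
    (P : S → A → S → ℝ) (η : S → ℝ) (γ : ℝ)
    (hγ0 : 0 < γ) (hγ1 : γ < 1)
    (hP0 : ∀ s a s', 0 ≤ P s a s') (hP1 : ∀ s a, ∑ s', P s a s' = 1)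
    (f : S → A → ℝ)
    (hf0 : ∀ s a, 0 ≤ f s a)
    (hfBF : ∀ s : S, ∑ a, f s a = η s + γ * ∑ s', ∑ a, P s' a s * f s' a)
    (π : S → A → ℝ)
    (hπ0 : ∀ s a, 0 ≤ π s a) (hπ1 : ∀ s, ∑ a, π s a = 1)
    -- π is the normalisation of f wherever the state mass is positive
    (hπf : ∀ s a, 0 < ∑ a', f s a' → π s a = f s a / ∑ a', f s a') :
    ∀ s a, occupancy P π η γ s a = f s a := by
  have hγ : |γ| < 1 := abs_lt.mpr ⟨by linarith, hγ1⟩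
  have hfπ : ∀ s a, f s a = π s a * ∑ a', f s a' := fun s ↦
    eq_mul_sum_of_eq_div_sum (hf0 s) (hπf s)
  have hρ : density P π η γ = fun s ↦ ∑ a, f s a :=
    eq_of_eq_add_smul_mulVec (transitionMatrix_nonneg hP0 hπ0)
      (fun s' ↦ (sum_transitionMatrix hP1 hπ1 s').le) hγ
      (density_eq_bellman hγ hP0 hP1 hπ0 hπ1) (flow_mass_eq_bellman hfBF hfπ)
  intro s a
  rw [occupancy_eq_density_mul, congrFun hρ s, hfπ s a, mul_comm]

theorem bellman_flow_solution_is_occupancy {S A : Type*} [Fintype S] [Fintype A]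
    (P : S → A → S → ℝ) (η : S → ℝ) (γ : ℝ)
    (hγ0 : 0 < γ) (hγ1 : γ < 1)
    (hP0 : ∀ s a s', 0 ≤ P s a s') (hP1 : ∀ s a, ∑ s', P s a s' = 1)
    (hη0 : ∀ s, 0 ≤ η s) (hη1 : ∑ s, η s = 1)
    (f : S → A → ℝ)
    (hf0 : ∀ s a, 0 ≤ f s a)
    (hfBF : ∀ s : S, ∑ a, f s a = η s + γ * ∑ s', ∑ a, P s' a s * f s' a)
    (π : S → A → ℝ)
    (hπ0 : ∀ s a, 0 ≤ π s a) (hπ1 : ∀ s, ∑ a, π s a = 1)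
    -- π is the normalisation of f wherever the state mass is positive
    (hπf : ∀ s a, 0 < ∑ a', f s a' → π s a = f s a / ∑ a', f s a') :
    ∀ s a, occupancy P π η γ s a = f s a :=
  bellman_flow_solution_is_occupancy_general P η γ hγ0 hγ1 hP0 hP1 f hf0 hfBF π hπ0 hπ1 hπf
end

section
/- The map from Bellman-flow-feasible occupancy measures to stationary policies, f ↦ π_f where π_f(a|s) = f(s,a)/∑_{a'} f(s,a'), is injective on the set of f with ∑_{a'} f(s,a') > 0 for all s: if two feasible f, g induce the same policy then f = g. (Uniqueness of the occupancy measure of a stationary policy.) -/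
/-!
Both flows induce the same policy `π`, so each factors as `f s a = π s a * F s` through its state
marginal `F s = ∑ a, f s a`, and the Bellman flow constraint becomes the affine fixed-point equation
`F = η + γ • (F ᵥ* P_π)`, where `P_π` is the (row-stochastic) state transition matrix of `π`.
Right multiplication by a row-stochastic matrix does not increase the `ℓ¹` norm, so for `|γ| < 1`
this equation has at most one solution. Hence `F = G` and `f = π * F = π * G = g`.
-/

open Finset Matrix

namespace Matrix

variable {R n : Type*} [Fintype n] [DecidableEq n]
  [CommRing R] [LinearOrder R] [IsStrictOrderedRing R] {M : Matrix n n R}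

lemma sum_abs_vecMul_le_of_mem_rowStochastic (hM : M ∈ rowStochastic R n) (x : n → R) :
    ∑ j, |(x ᵥ* M) j| ≤ ∑ i, |x i| :=
  calc ∑ j, |(x ᵥ* M) j| ≤ ∑ j, ∑ i, |x i| * M i j := by
        refine sum_le_sum fun j _ => (abs_sum_le_sum_abs _ _).trans_eq ?_
        simp only [abs_mul, abs_of_nonneg (nonneg_of_mem_rowStochastic hM)]
    _ = ∑ i, |x i| := by
        rw [sum_comm]
        simp only [← mul_sum, sum_row_of_mem_rowStochastic hM, mul_one]

lemma eq_of_eq_add_smul_vecMul_of_mem_rowStochastic (hM : M ∈ rowStochastic R n) {γ : R}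
    (hγ : |γ| < 1) {c x y : n → R} (hx : x = c + γ • (x ᵥ* M)) (hy : y = c + γ • (y ᵥ* M)) :
    x = y := by
  set d := x - y
  have hd : d = γ • (d ᵥ* M) := by
    simp only [d, sub_vecMul, smul_sub]
    nth_rw 1 [hx, hy]
    abel
  have hbound : ∑ i, |d i| ≤ |γ| * ∑ i, |d i| :=
    calc ∑ i, |d i| = |γ| * ∑ j, |(d ᵥ* M) j| := by
          nth_rw 1 [hd]
          simp only [Pi.smul_apply, smul_eq_mul, abs_mul, mul_sum]
      _ ≤ |γ| * ∑ i, |d i| :=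
          mul_le_mul_of_nonneg_left (sum_abs_vecMul_le_of_mem_rowStochastic hM d) (abs_nonneg γ)
  have hzero : ∑ i, |d i| = 0 := by
    nlinarith [sum_nonneg fun i (_ : i ∈ univ) => abs_nonneg (d i)]
  funext i
  have := (sum_eq_zero_iff_of_nonneg fun i _ => abs_nonneg (d i)).1 hzero i (mem_univ i)
  exact sub_eq_zero.1 (abs_eq_zero.1 this)

end Matrix

section PolicyTransition

variable {S A R : Type*} [Fintype S] [Fintype A]

def policyTransition [Semiring R] (P : S → A → S → R) (π : S → A → R) : Matrix S S R :=
  Matrix.of fun s s' => ∑ a, π s a * P s a s'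

lemma policyTransition_mem_rowStochastic [DecidableEq S] [Semiring R] [PartialOrder R]
    [IsOrderedRing R] {P : S → A → S → R} {π : S → A → R}
    (hP0 : ∀ s a s', 0 ≤ P s a s') (hP1 : ∀ s a, ∑ s', P s a s' = 1)
    (hπ0 : ∀ s a, 0 ≤ π s a) (hπ1 : ∀ s, ∑ a, π s a = 1) :
    policyTransition P π ∈ rowStochastic R S := by
  refine mem_rowStochastic_iff_sum.2 ⟨fun s s' => ?_, fun s => ?_⟩
  · exact sum_nonneg fun a _ => mul_nonneg (hπ0 s a) (hP0 s a s')
  · simp only [policyTransition, of_apply]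
    rw [sum_comm]
    simp only [← mul_sum, hP1, mul_one, hπ1]

lemma marginal_eq_add_smul_vecMul_policyTransition [CommSemiring R] {P : S → A → S → R}
    {π f : S → A → R} {η : S → R} {γ : R} (hfπ : ∀ s a, f s a = π s a * ∑ a', f s a')
    (hBF : ∀ s, ∑ a, f s a = η s + γ * ∑ s', ∑ a, P s' a s * f s' a) :
    (fun s => ∑ a, f s a) = η + γ • ((fun s => ∑ a, f s a) ᵥ* policyTransition P π) := by
  funext s
  rw [hBF s]
  simp only [Pi.add_apply, Pi.smul_apply, smul_eq_mul, vecMul, dotProduct, policyTransition,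
    of_apply, mul_sum]
  congr 2 with s'
  exact sum_congr rfl fun a _ => by rw [hfπ s' a]; ring

end PolicyTransition

theorem bellman_flow_policy_map_injective_general {S A : Type*} [Fintype S] [Fintype A]
    (P : S → A → S → ℝ) (η : S → ℝ) (γ : ℝ)
    (hγ0 : 0 < γ) (hγ1 : γ < 1)
    (hP0 : ∀ s a s', 0 ≤ P s a s') (hP1 : ∀ s a, ∑ s', P s a s' = 1)
    (f g : S → A → ℝ)
    (hf0 : ∀ s a, 0 ≤ f s a)
    (hfBF : ∀ s : S, ∑ a, f s a = η s + γ * ∑ s', ∑ a, P s' a s * f s' a)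
    (hgBF : ∀ s : S, ∑ a, g s a = η s + γ * ∑ s', ∑ a, P s' a s * g s' a)
    (hfpos : ∀ s, 0 < ∑ a, f s a) (hgpos : ∀ s, 0 < ∑ a, g s a)
    -- f and g induce the same stationary policy
    (hsame : ∀ s a, f s a / ∑ a', f s a' = g s a / ∑ a', g s a') :
    f = g := by
  classical
  set π : S → A → ℝ := fun s a => f s a / ∑ a', f s a'
  have hfπ : ∀ s a, f s a = π s a * ∑ a', f s a' :=
    fun s a => (div_mul_cancel₀ _ (hfpos s).ne').symm
  have hgπ : ∀ s a, g s a = π s a * ∑ a', g s a' :=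
    fun s a => by rw [show π s a = _ from hsame s a, div_mul_cancel₀ _ (hgpos s).ne']
  have hM : policyTransition P π ∈ rowStochastic ℝ S :=
    policyTransition_mem_rowStochastic hP0 hP1 (fun s a => div_nonneg (hf0 s a) (hfpos s).le)
      (fun s => by rw [← sum_div, div_self (hfpos s).ne'])
  have hFG : (fun s => ∑ a, f s a) = fun s => ∑ a, g s a :=
    eq_of_eq_add_smul_vecMul_of_mem_rowStochastic hM (abs_lt.2 ⟨by linarith, hγ1⟩)
      (marginal_eq_add_smul_vecMul_policyTransition hfπ hfBF)
      (marginal_eq_add_smul_vecMul_policyTransition hgπ hgBF)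
  funext s a
  rw [hfπ, hgπ, congrFun hFG s]

theorem bellman_flow_policy_map_injective {S A : Type*} [Fintype S] [Fintype A]
    (P : S → A → S → ℝ) (η : S → ℝ) (γ : ℝ)
    (hγ0 : 0 < γ) (hγ1 : γ < 1)
    (hP0 : ∀ s a s', 0 ≤ P s a s') (hP1 : ∀ s a, ∑ s', P s a s' = 1)
    (hη0 : ∀ s, 0 < η s) (hη1 : ∑ s, η s = 1)
    (f g : S → A → ℝ)
    (hf0 : ∀ s a, 0 ≤ f s a)
    (hfBF : ∀ s : S, ∑ a, f s a = η s + γ * ∑ s', ∑ a, P s' a s * f s' a)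
    (hg0 : ∀ s a, 0 ≤ g s a)
    (hgBF : ∀ s : S, ∑ a, g s a = η s + γ * ∑ s', ∑ a, P s' a s * g s' a)
    (hfpos : ∀ s, 0 < ∑ a, f s a) (hgpos : ∀ s, 0 < ∑ a, g s a)
    -- f and g induce the same stationary policy
    (hsame : ∀ s a, f s a / ∑ a', f s a' = g s a / ∑ a', g s a') :
    f = g :=
  bellman_flow_policy_map_injective_general P η γ hγ0 hγ1 hP0 hP1 f g hf0 hfBF hgBF hfpos hgpos
    hsame
end
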